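/- Let n = k² be a perfect square with n > 9. In the lollipop graph L_n, the price of fairness at target fairness level α = 1 satisfies PoF(L_n, 1) > 1 − 2/(√n − 1). -/

import Mathlib

open Finset

/-- Number of edges of `G` with both endpoints in `S`. -/
def edgesIn {V : Type*} [Fintype V] [DecidableEq V] (G : SimpleGraph V)
    [DecidableRel G.Adj] (S : Finset V) : ℕ :=
  (G.edgeFinset.filter (fun e => ∀ v ∈ e, v ∈ S)).card

/-- Density `ρ(S) = 2 e(S) / |S|` of the subgraph induced by `S`. -/
noncomputable def rho {V : Type*} [Fintype V] [DecidableEq V] (G : SimpleGraph V)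
    [DecidableRel G.Adj] (S : Finset V) : ℝ :=
  2 * (edgesIn G S : ℝ) / S.card

/-- Fairness regularizer `r1(S) = |S ∩ Sp| / |S|`. -/
noncomputable def r1 {V : Type*} [DecidableEq V] (Sp S : Finset V) : ℝ :=
  ((S ∩ Sp).card : ℝ) / S.card

/-- The lollipop graph `L_n` on `n = k²` vertices: vertices `0, …, k-1` form a
clique (the unprotected vertices), vertices `k, …, k²-1` form a path (the
protected vertices), and one endpoint of the path (vertex `k`) is joined to
one vertex of the clique (vertex `k-1`). -/
def lollipop (k : ℕ) : SimpleGraph (Fin (k * k)) where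
  Adj u v := u ≠ v ∧ ((u.val < k ∧ v.val < k) ∨
      (u.val + 1 = v.val ∧ k ≤ v.val) ∨ (v.val + 1 = u.val ∧ k ≤ u.val))
  symm := by
    constructor
    intro u v h
    refine ⟨Ne.symm h.1, ?_⟩
    rcases h.2 with h | h | h
    · exact Or.inl ⟨h.2, h.1⟩
    · exact Or.inr (Or.inr h)
    · exact Or.inr (Or.inl h)
  loopless := by constructor; intro v h; exact h.1 rfl

instance lollipopDecAdj (k : ℕ) : DecidableRel (lollipop k).Adj :=
  fun _ _ => inferInstanceAs (Decidable (_ ∧ _))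

/-- The protected subset of the lollipop graph: the vertices of the path. -/
def lollipopProtected (k : ℕ) : Finset (Fin (k * k)) :=
  Finset.univ.filter (fun v => k ≤ v.val)

/-- The vertex set of the clique `C_√n` in the lollipop graph. -/
def lollipopClique (k : ℕ) : Finset (Fin (k * k)) :=
  Finset.univ.filter (fun v => v.val < k)

/-- Density of the densest subgraph: `ρ*_G = max_{∅ ≠ S ⊆ V} ρ(S)`. -/
noncomputable def rhoStar {V : Type*} [Fintype V] [DecidableEq V] (G : SimpleGraph V)
    [DecidableRel G.Adj] : ℝ :=
  sSup {x : ℝ | ∃ S : Finset V, S.Nonempty ∧ rho G S = x}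

/-- Density of the densest subgraph at fairness level `α`:
`ρ*_G(α) = max {ρ(S) : ∅ ≠ S ⊆ V, r1(S) = α}`. -/
noncomputable def rhoStarAlpha {V : Type*} [Fintype V] [DecidableEq V] (G : SimpleGraph V)
    [DecidableRel G.Adj] (Sp : Finset V) (α : ℝ) : ℝ :=
  sSup {x : ℝ | ∃ S : Finset V, S.Nonempty ∧ r1 Sp S = α ∧ rho G S = x}

/-- Price of fairness `PoF(G, α) = 1 - ρ*_G(α) / ρ*_G`. -/
noncomputable def PoF {V : Type*} [Fintype V] [DecidableEq V] (G : SimpleGraph V)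
    [DecidableRel G.Adj] (Sp : Finset V) (α : ℝ) : ℝ :=
  1 - rhoStarAlpha G Sp α / rhoStar G

/-! The unprotected vertices form a clique of density `k - 1`, so `ρ* ≥ k - 1`. A set with
`r1 = 1` lies on the path, where each vertex has at most one neighbour above it; sending every
edge to its lower endpoint injects the edges of `S` into `S` minus its maximum, so `e(S) < |S|`
and `ρ*(1) < 2`. Hence `ρ*(1) / ρ* < 2 / (k - 1)`. -/

section Density

variable {V : Type*} [DecidableEq V]

theorem subset_of_r1_eq_one {Sp S : Finset V} (hS : S.Nonempty) (h : r1 Sp S = 1) : S ⊆ Sp := by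
  have hpos : (0 : ℝ) < #S := by exact_mod_cast hS.card_pos
  rw [r1, div_eq_one_iff_eq hpos.ne'] at h
  exact inter_eq_left.1 (eq_of_subset_of_card_le inter_subset_left (by exact_mod_cast h.ge))

variable [Fintype V] (G : SimpleGraph V) [DecidableRel G.Adj]

theorem edgesIn_eq_choose_two_of_isClique {S : Finset V} (hS : G.IsClique (S : Set V)) :
    edgesIn G S = (#S).choose 2 := by
  rw [edgesIn, ← Sym2.card_image_offDiag]
  congr 1
  ext e
  induction e using Sym2.ind with
  | h a b =>
    simp only [mem_filter, SimpleGraph.mem_edgeFinset, SimpleGraph.mem_edgeSet, Sym2.forall_mem_pair]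
    constructor
    · rintro ⟨hab, ha, hb⟩
      exact mem_image.2 ⟨(a, b), mem_offDiag.2 ⟨ha, hb, hab.ne⟩, rfl⟩
    · intro h
      obtain ⟨⟨x, y⟩, hxy, he⟩ := mem_image.1 h
      obtain ⟨hx, hy, hne⟩ := mem_offDiag.1 hxy
      rcases Sym2.eq_iff.1 he with ⟨rfl, rfl⟩ | ⟨rfl, rfl⟩
      · exact ⟨hS hx hy hne, hx, hy⟩
      · exact ⟨hS hy hx hne.symm, hy, hx⟩

theorem rho_eq_card_sub_one_of_isClique {S : Finset V} (hne : S.Nonempty)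
    (hS : G.IsClique (S : Set V)) : rho G S = #S - 1 := by
  have hpos : (0 : ℝ) < #S := by exact_mod_cast hne.card_pos
  rw [rho, edgesIn_eq_choose_two_of_isClique G hS, Nat.cast_choose_two, div_eq_iff hpos.ne']
  ring

theorem rho_lt_two_of_edgesIn_lt_card {S : Finset V} (h : edgesIn G S < #S) : rho G S < 2 := by
  have hpos : (0 : ℝ) < #S := by exact_mod_cast (Nat.zero_le _).trans_lt h
  rw [rho, div_lt_iff₀ hpos]
  have : (edgesIn G S : ℝ) < #S := by exact_mod_cast h
  linarith

theorem rho_le_rhoStar {S : Finset V} (hS : S.Nonempty) : rho G S ≤ rhoStar G :=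
  le_csSup ((Set.finite_range (rho G)).subset (by rintro _ ⟨T, -, rfl⟩; exact ⟨T, rfl⟩)).bddAbove
    ⟨S, hS, rfl⟩

theorem rhoStarAlpha_one_lt {Sp : Finset V} {c : ℝ} (hc : 0 < c)
    (h : ∀ S : Finset V, S.Nonempty → S ⊆ Sp → rho G S < c) : rhoStarAlpha G Sp 1 < c := by
  set A := {x : ℝ | ∃ S : Finset V, S.Nonempty ∧ r1 Sp S = 1 ∧ rho G S = x}
  change sSup A < c
  rcases A.eq_empty_or_nonempty with hA | hA
  · rwa [hA, Real.sSup_empty]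
  · have hfin : A.Finite :=
      (Set.finite_range (rho G)).subset (by rintro _ ⟨T, -, -, rfl⟩; exact ⟨T, rfl⟩)
    obtain ⟨S, hS, hr, hρ⟩ := hA.csSup_mem hfin
    rw [← hρ]
    exact h S hS (subset_of_r1_eq_one hS hr)

variable [LinearOrder V]

theorem edgesIn_lt_card {S : Finset V} (hS : S.Nonempty)
    (h : ∀ u ∈ S, ∀ v ∈ S, ∀ w ∈ S, u < v → u < w → G.Adj u v → G.Adj u w → v = w) :
    edgesIn G S < #S := by
  have hlt : ∀ e ∈ G.edgeFinset.filter (fun e => ∀ v ∈ e, v ∈ S),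
      ∃ u v, e = s(u, v) ∧ u < v ∧ G.Adj u v ∧ u ∈ S ∧ v ∈ S := by
    intro e he
    induction e using Sym2.ind with
    | h a b =>
      simp only [mem_filter, SimpleGraph.mem_edgeFinset, SimpleGraph.mem_edgeSet,
        Sym2.forall_mem_pair] at he
      obtain ⟨hab, ha, hb⟩ := he
      rcases hab.ne.lt_or_gt with h | h
      · exact ⟨a, b, rfl, h, hab, ha, hb⟩
      · exact ⟨b, a, Sym2.eq_swap, h, hab.symm, hb, ha⟩
  calc edgesIn G S ≤ #(S.erase (S.max' hS)) := by
        refine card_le_card_of_injOn Sym2.inf (fun e he => ?_) (fun e₁ he₁ e₂ he₂ heq => ?_)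
        · obtain ⟨u, v, rfl, huv, -, hu, hv⟩ := hlt e he
          rw [Sym2.inf_mk, inf_of_le_left huv.le]
          exact mem_erase.2 ⟨(huv.trans_le (S.le_max' v hv)).ne, hu⟩
        · obtain ⟨u₁, v₁, rfl, huv₁, hadj₁, hu₁, hv₁⟩ := hlt e₁ he₁
          obtain ⟨u₂, v₂, rfl, huv₂, hadj₂, -, hv₂⟩ := hlt e₂ he₂
          simp only [Sym2.inf_mk, inf_of_le_left huv₁.le, inf_of_le_left huv₂.le] at heq
          subst heq
          rw [h u₁ hu₁ v₁ hv₁ v₂ hv₂ huv₁ huv₂ hadj₁ hadj₂]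
    _ < #S := card_erase_lt_of_mem (S.max'_mem hS)

end Density

section Lollipop

variable (k : ℕ)

theorem lollipop_isClique : (lollipop k).IsClique (lollipopClique k : Set (Fin (k * k))) := by
  intro u hu v hv huv
  simp only [lollipopClique, coe_filter, mem_univ, true_and, Set.mem_ofPred_eq] at hu hv
  exact ⟨huv, Or.inl ⟨hu, hv⟩⟩

theorem card_lollipopClique : #(lollipopClique k) = k := by
  rw [lollipopClique, Fin.card_filter_val_lt]
  exact min_eq_right (Nat.le_mul_self k)

variable {k}

theorem val_eq_succ_of_lollipop_adj {u v : Fin (k * k)} (hu : u ∈ lollipopProtected k)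
    (huv : u < v) (hadj : (lollipop k).Adj u v) : v.val = u.val + 1 := by
  simp only [lollipopProtected, mem_filter, mem_univ, true_and] at hu
  rw [Fin.lt_def] at huv
  obtain ⟨-, h | h | h⟩ := hadj <;> omega

theorem sub_one_le_rhoStar_lollipop (hk : 1 ≤ k) : (k : ℝ) - 1 ≤ rhoStar (lollipop k) := by
  have hne : (lollipopClique k).Nonempty := card_pos.1 (by rw [card_lollipopClique]; omega)
  simpa [rho_eq_card_sub_one_of_isClique _ hne (lollipop_isClique k), card_lollipopClique]
    using rho_le_rhoStar (lollipop k) hne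

variable (k)

theorem rhoStarAlpha_lollipop_lt_two : rhoStarAlpha (lollipop k) (lollipopProtected k) 1 < 2 :=
  rhoStarAlpha_one_lt _ two_pos fun _ hS hsub =>
    rho_lt_two_of_edgesIn_lt_card _ <| edgesIn_lt_card _ hS
      fun _ hu _ _ _ _ huv huw hv hw => Fin.ext <|
        (val_eq_succ_of_lollipop_adj (hsub hu) huv hv).trans
          (val_eq_succ_of_lollipop_adj (hsub hu) huw hw).symm

end Lollipop

theorem stmt7_general (k : ℕ) (hk : 2 ≤ k) :
    1 - 2 / ((k : ℝ) - 1) < PoF (lollipop k) (lollipopProtected k) 1 := by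
  have hk1 : (0 : ℝ) < k - 1 := by
    have : (2 : ℝ) ≤ k := by exact_mod_cast hk
    linarith
  have hstar := sub_one_le_rhoStar_lollipop (k := k) (by omega)
  rw [PoF, sub_lt_sub_iff_left]
  calc rhoStarAlpha (lollipop k) (lollipopProtected k) 1 / rhoStar (lollipop k)
      < 2 / rhoStar (lollipop k) :=
        div_lt_div_of_pos_right (rhoStarAlpha_lollipop_lt_two k) (hk1.trans_le hstar)
    _ ≤ 2 / (k - 1) := div_le_div_of_nonneg_left zero_le_two hk1 hstar

/-- For a perfect square `n = k² > 9`, the price of fairness of the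
lollipop graph `L_n` at target fairness level `α = 1` satisfies
`PoF(L_n, 1) > 1 - 2/(√n - 1)`. -/
theorem stmt7 (k : ℕ) (hk : 2 ≤ k) (hn : 9 < k * k) :
    1 - 2 / ((k : ℝ) - 1) < PoF (lollipop k) (lollipopProtected k) 1 :=
  stmt7_general k hk
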